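/- arXiv:2312.16349 — 3 statements merged into one kernel-verified Lean document; each statement's English description precedes it below -/
import Mathlib

section
/- Let (X_n) be an exchangeable sequence of integrable real random variables on a probability space (Ω, Σ, P). Then the sample averages (X_1 + ... + X_n)/n converge almost surely to E[X_1 | E_∞], where E_∞ is the exchangeable σ-algebra of the sequence. -/
/-!
For `n ≥ 1`, exchangeability gives `∫_B X i = ∫_B X 0` for `i < n` on every event `B` that is
invariant under permutations of the first `n` coordinates, so the sample mean `Sₙ / n` is the
conditional expectation of `X 0` given the σ-algebra `𝒮ₙ` of such events. The `𝒮ₙ` decrease, so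
`(Sₙ / n)` is a reversed martingale: Doob's upcrossing inequality, applied to its time reversals on
`{0, …, N}`, bounds the upcrossings uniformly in `N` and gives almost sure convergence. The limit
`limsup Sₙ / n` is measurable for the exchangeable σ-algebra `ℰ ≤ 𝒮ₙ`, and uniform integrability of
conditional expectations lets `∫_B` pass to the limit for `B ∈ ℰ`, identifying it with `E[X 0 | ℰ]`.
-/

open MeasureTheory ProbabilityTheory Filter Finset Topology

/-- A sequence of random elements is exchangeable if every finite coordinate
permutation leaves the joint distribution unchanged. -/
def Exchangeable {Ω S : Type*} {mΩ : MeasurableSpace Ω} [MeasurableSpace S]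
    (P : Measure Ω) (X : ℕ → Ω → S) : Prop :=
  ∀ (n : ℕ) (σ : Equiv.Perm (Fin n)),
    P.map (fun ω (i : Fin n) => X i ω) = P.map (fun ω (i : Fin n) => X (σ i) ω)

/-- The exchangeable σ-algebra of the sequence: preimages under the whole sequence of
measurable sets of `ℕ → S` invariant under all finite permutations of coordinates. -/
def exchangeableSigma {Ω S : Type*} [MeasurableSpace S] (X : ℕ → Ω → S) :
    MeasurableSpace Ω :=
  MeasurableSpace.generateFrom
    {B | ∃ A : Set (ℕ → S), MeasurableSet A ∧
      (∀ π : Equiv.Perm ℕ, (∃ N, ∀ m ≥ N, π m = m) →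
        (fun s : ℕ → S => fun i => s (π i)) ⁻¹' A = A) ∧
      B = (fun ω i => X i ω) ⁻¹' A}

/-- The tail σ-algebra of the sequence. -/
def tailSigma {Ω S : Type*} [MeasurableSpace S] (X : ℕ → Ω → S) :
    MeasurableSpace Ω :=
  ⨅ n : ℕ, MeasurableSpace.comap (fun ω (k : ℕ) => X (n + k) ω) inferInstance

/-- The left-shift invariant σ-algebra of the sequence. -/
def shiftInvariantSigma {Ω S : Type*} [MeasurableSpace S] (X : ℕ → Ω → S) :
    MeasurableSpace Ω :=
  MeasurableSpace.generateFrom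
    {B | ∃ A : Set (ℕ → S), MeasurableSet A ∧
      (fun s : ℕ → S => fun i => s (i + 1)) ⁻¹' A = A ∧
      B = (fun ω i => X i ω) ⁻¹' A}

/-- `κ` is a regular conditional distribution of `X` given the sub-σ-algebra `𝒢`. -/
def IsRCD {Ω S : Type*} [MeasurableSpace S] {mΩ : MeasurableSpace Ω}
    (P : Measure Ω) (X : Ω → S) (𝒢 : MeasurableSpace Ω)
    (κ : @Kernel Ω S 𝒢 _) : Prop :=
  ∀ B : Set S, MeasurableSet B →
    (fun ω => (κ ω B).toReal) =ᵐ[P]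
      MeasureTheory.condExp 𝒢 P (fun ω => B.indicator (fun _ => (1 : ℝ)) (X ω))

/-- The sequence `X` is conditionally iid given `𝒢`, with kernel `κ`: the conditional
distribution of the sequence given `𝒢` is the infinite product kernel `κ^∞`, expressed
via its finite-dimensional distributions. -/
def CondIIDKernel {Ω S : Type*} [MeasurableSpace S] {mΩ : MeasurableSpace Ω}
    (P : Measure Ω) (X : ℕ → Ω → S) (𝒢 : MeasurableSpace Ω)
    (κ : @Kernel Ω S 𝒢 _) : Prop :=
  ∀ (m : ℕ) (A : Fin m → Set S), (∀ i, MeasurableSet (A i)) →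
    ∀ G : Set Ω, MeasurableSet[𝒢] G →
      P (G ∩ ⋂ i, {ω | X i ω ∈ A i}) = ∫⁻ ω in G, ∏ i, κ ω (A i) ∂P

/-- The sequence `X` is conditionally iid given `𝒢`. -/
def CondIID {Ω S : Type*} [MeasurableSpace S] {mΩ : MeasurableSpace Ω}
    (P : Measure Ω) (X : ℕ → Ω → S) (𝒢 : MeasurableSpace Ω) : Prop :=
  ∃ κ : @Kernel Ω S 𝒢 _, @IsMarkovKernel Ω S 𝒢 _ κ ∧ CondIIDKernel P X 𝒢 κ

/-- `empAvg X B ω n` is the empirical measure `μ_{ω,n}(B)` of the set `B`. -/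
noncomputable def empAvg {Ω S : Type*} (X : ℕ → Ω → S) (B : Set S) (ω : Ω) (n : ℕ) : ℝ :=
  (∑ i ∈ Finset.range n, B.indicator (fun _ => (1 : ℝ)) (X i ω)) / n

/-- A Borel measure is tight if compacts have measure arbitrarily close to full. -/
def IsTightMeasure {S : Type*} [TopologicalSpace S] [MeasurableSpace S]
    (μ : Measure S) : Prop :=
  ∀ ε : ℝ, 0 < ε → ∃ K : Set S, IsCompact K ∧ 1 - ENNReal.ofReal ε < μ K

/-- `μ` is outer regular on compact sets. -/
def OuterRegularOnCompacts {S : Type*} [TopologicalSpace S] [MeasurableSpace S]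
    (μ : Measure S) : Prop :=
  ∀ K : Set S, IsCompact K → μ K = ⨅ O ∈ {O : Set S | IsOpen O ∧ K ⊆ O}, μ O

/-- `μ` is a Radon measure: inner regular with respect to compact sets on Borel sets. -/
def IsRadon {S : Type*} [TopologicalSpace S] [MeasurableSpace S]
    (μ : Measure S) : Prop :=
  ∀ B : Set S, MeasurableSet B → μ B = ⨆ K ∈ {K : Set S | IsCompact K ∧ K ⊆ B}, μ K


open scoped ENNReal

namespace MeasureTheory

variable {Ω : Type*} {m0 : MeasurableSpace Ω} {μ : Measure Ω}

section Upcrossings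

variable {a b : ℝ} {f : ℕ → Ω → ℝ} {ω : Ω}

/-- `upcrossingsBefore a b (fun k => f (N - k)) (N + 1 - m)` counts the upcrossings of the
reversed sequence `f N, f (N - 1), …, f m`. -/
lemma eventually_le_upcrossingsBefore_reverse (hab : a < b)
    (h₁ : ∃ᶠ n in atTop, f n ω < a) (h₂ : ∃ᶠ n in atTop, b < f n ω) (K : ℕ) :
    ∀ m, ∀ᶠ N in atTop, K ≤ upcrossingsBefore a b (fun k => f (N - k)) (N + 1 - m) ω := by
  induction K with
  | zero => exact fun _ => Eventually.of_forall fun _ => Nat.zero_le _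
  | succ K ih =>
    intro m
    obtain ⟨t, hmt, ht⟩ := frequently_atTop.1 h₂ m
    obtain ⟨s, hts, hs⟩ := frequently_atTop.1 h₁ (t + 1)
    filter_upwards [ih (s + 1), eventually_ge_atTop s] with N hK hsN
    have hlt : upcrossingsBefore a b (fun k => f (N - k)) (N - s) ω <
        upcrossingsBefore a b (fun k => f (N - k)) (N - t + 1) ω :=
      upcrossingsBefore_lt_of_exists_upcrossing hab le_rfl (by rwa [Nat.sub_sub_self hsN])
        (by omega) (by rwa [Nat.sub_sub_self (by omega)])
    have hmono : upcrossingsBefore a b (fun k => f (N - k)) (N - t + 1) ω ≤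
        upcrossingsBefore a b (fun k => f (N - k)) (N + 1 - m) ω :=
      upcrossingsBefore_mono hab (by omega) ω
    rw [show N + 1 - (s + 1) = N - s by omega] at hK
    omega

lemma tendsto_upcrossingsBefore_reverse (hab : a < b)
    (h₁ : ∃ᶠ n in atTop, f n ω < a) (h₂ : ∃ᶠ n in atTop, b < f n ω) :
    Tendsto (fun N => upcrossingsBefore a b (fun k => f (N - k)) (N + 1) ω) atTop atTop :=
  tendsto_atTop.2 fun K => by
    simpa using eventually_le_upcrossingsBefore_reverse hab h₁ h₂ K 0

end Upcrossings

lemma exists_tendsto_of_not_frequently_lt_and_gt {x : ℕ → ℝ}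
    (h₁ : liminf (fun n => ‖x n‖ₑ) atTop < ∞)
    (h₂ : ∀ a b : ℚ, a < b → ¬((∃ᶠ n in atTop, x n < a) ∧ ∃ᶠ n in atTop, b < x n)) :
    ∃ c, Tendsto x atTop (𝓝 c) := by
  by_cases h : IsBoundedUnder (· ≤ ·) atTop fun n => |x n|
  · rw [isBoundedUnder_le_abs] at h
    refine tendsto_of_no_upcrossings Rat.denseRange_cast ?_ h.1 h.2
    rintro _ ⟨a, rfl⟩ _ ⟨b, rfl⟩ hab
    exact h₂ a b (Rat.cast_lt.1 hab)
  · obtain ⟨a, b, hab, ha, hb⟩ := ENNReal.exists_upcrossings_of_not_bounded_under h₁.ne h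
    exact (h₂ a b hab ⟨ha, hb⟩).elim

section Antitone

variable {ℱ : ℕ → MeasurableSpace Ω}

/-- Because of truncated subtraction, this filtration stays at `ℱ 0` after time `N`. -/
def reverseFiltration (hℱ : Antitone ℱ) (hle : ∀ n, ℱ n ≤ m0) (N : ℕ) : Filtration ℕ m0 where
  seq k := ℱ (N - k)
  mono' _ _ hij := hℱ (Nat.sub_le_sub_left hij N)
  le' _ := hle _

variable [IsFiniteMeasure μ] {a b : ℝ}

lemma lintegral_upcrossingsBefore_reverse_le (hℱ : Antitone ℱ) (hle : ∀ n, ℱ n ≤ m0)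
    (f : Ω → ℝ) (hab : a < b) (N : ℕ) :
    ∫⁻ ω, (upcrossingsBefore a b (fun k => μ[f | ℱ (N - k)]) (N + 1) ω : ℝ≥0∞) ∂μ ≤
      ENNReal.ofReal ((∫ ω, (μ[f | ℱ 0] ω - a)⁺ ∂μ) / (b - a)) := by
  have hmart := martingale_condExp f (reverseFiltration hℱ hle N) μ
  have hdoob := hmart.submartingale.mul_integral_upcrossingsBefore_le_integral_pos_part a b (N + 1)
  have hint := hmart.stronglyAdapted.integrable_upcrossingsBefore (μ := μ) (N := N + 1) hab
  simp only [reverseFiltration] at hdoob hint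
  rw [show N - (N + 1) = 0 by omega] at hdoob
  simp_rw [← ENNReal.ofReal_natCast]
  rw [← ofReal_integral_eq_lintegral_ofReal hint (Eventually.of_forall fun _ => by positivity)]
  exact ENNReal.ofReal_le_ofReal ((le_div_iff₀' (sub_pos.2 hab)).2 hdoob)

lemma ae_not_frequently_condExp_lt_and_gt (hℱ : Antitone ℱ) (hle : ∀ n, ℱ n ≤ m0)
    (f : Ω → ℝ) (hab : a < b) :
    ∀ᵐ ω ∂μ, ¬((∃ᶠ n in atTop, μ[f | ℱ n] ω < a) ∧ ∃ᶠ n in atTop, b < μ[f | ℱ n] ω) := by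
  set U : ℕ → Ω → ℝ≥0∞ := fun N ω =>
    upcrossingsBefore a b (fun k => μ[f | ℱ (N - k)]) (N + 1) ω
  have hmeas : ∀ N, Measurable (U N) := fun N => measurable_from_top.comp <|
    (martingale_condExp f (reverseFiltration hℱ hle N) μ).stronglyAdapted
      |>.measurable_upcrossingsBefore hab
  have hfin : ∀ᵐ ω ∂μ, liminf (fun N => U N ω) atTop < ∞ :=
    ae_lt_top (.liminf hmeas) (ne_top_of_le_ne_top ENNReal.ofReal_ne_top
      ((lintegral_liminf_le hmeas).trans (liminf_le_of_frequently_le'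
        (.of_forall (lintegral_upcrossingsBefore_reverse_le hℱ hle f hab)))))
  filter_upwards [hfin] with ω hω ⟨h₁, h₂⟩
  have hU_top := (ENNReal.tendsto_nat_nhds_top.comp
    (tendsto_upcrossingsBefore_reverse hab h₁ h₂)).liminf_eq
  exact hω.ne hU_top

/-- Reversed martingales converge almost everywhere. -/
theorem exists_ae_tendsto_condExp_of_antitone (hℱ : Antitone ℱ) (hle : ∀ n, ℱ n ≤ m0)
    (f : Ω → ℝ) : ∀ᵐ ω ∂μ, ∃ c, Tendsto (fun n => μ[f | ℱ n] ω) atTop (𝓝 c) := by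
  have hcross : ∀ᵐ ω ∂μ, ∀ a b : ℚ, a < b →
      ¬((∃ᶠ n in atTop, μ[f | ℱ n] ω < a) ∧ ∃ᶠ n in atTop, b < μ[f | ℱ n] ω) := by
    simp only [ae_all_iff, eventually_imp_distrib_left]
    exact fun a b hab => ae_not_frequently_condExp_lt_and_gt hℱ hle f (Rat.cast_lt.2 hab)
  have hbdd : ∀ n, eLpNorm (μ[f | ℱ n]) 1 μ ≤ (eLpNorm f 1 μ).toNNReal := by
    intro n
    by_cases hf : Integrable f μ
    · rw [ENNReal.coe_toNNReal (memLp_one_iff_integrable.2 hf).eLpNorm_ne_top]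
      exact eLpNorm_condExp_le_eLpNorm f le_rfl
    · simp [condExp_of_not_integrable hf]
  filter_upwards [hcross, ae_bdd_liminf_atTop_of_eLpNorm_bdd one_ne_zero
    (fun n => (stronglyMeasurable_condExp.mono (hle n)).measurable) hbdd] with ω h₁ h₂
  exact exists_tendsto_of_not_frequently_lt_and_gt h₂ h₁

end Antitone

theorem ae_eq_condExp_of_tendsto_condExp [IsFiniteMeasure μ] {ℱ : ℕ → MeasurableSpace Ω}
    {𝒢 : MeasurableSpace Ω} {f g : Ω → ℝ} (hℱ : ∀ n, ℱ n ≤ m0) (h𝒢 : ∀ n, 𝒢 ≤ ℱ n)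
    (hf : Integrable f μ) (hg : StronglyMeasurable[𝒢] g)
    (hlim : ∀ᵐ ω ∂μ, Tendsto (fun n => μ[f | ℱ n] ω) atTop (𝓝 (g ω))) :
    g =ᵐ[μ] μ[f | 𝒢] := by
  have hUI := hf.uniformIntegrable_condExp hℱ
  have hgint : Integrable g μ := hUI.integrable_of_ae_tendsto hlim
  have hL1 := tendsto_Lp_finite_of_tendsto_ae le_rfl ENNReal.one_ne_top (fun n => hUI.1 n)
    (memLp_one_iff_integrable.2 hgint) hUI.2.1 hlim
  simp only [eLpNorm_one_eq_lintegral_enorm, Pi.sub_apply] at hL1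
  refine ae_eq_condExp_of_forall_setIntegral_eq ((h𝒢 0).trans (hℱ 0)) hf
    (fun s _ _ => hgint.integrableOn) (fun s hs _ => ?_) hg.aestronglyMeasurable
  refine tendsto_nhds_unique (tendsto_setIntegral_of_L1 g hgint.1
    (Eventually.of_forall fun n => integrable_condExp) hL1 s) ?_
  simp_rw [setIntegral_condExp (hℱ _) hf (h𝒢 _ s hs)]
  exact tendsto_const_nhds

end MeasureTheory

namespace Equiv.Perm

variable {π : Equiv.Perm ℕ} {n : ℕ}

lemma apply_lt_iff_of_forall_ge (hπ : ∀ m ≥ n, π m = m) (i : ℕ) : π i < n ↔ i < n := by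
  constructor
  · intro h
    by_contra! hi
    rw [hπ i hi] at h
    omega
  · intro hi
    by_contra! h
    have := π.injective (hπ (π i) h)
    omega

def finPerm (π : Equiv.Perm ℕ) (hπ : ∀ m ≥ n, π m = m) : Equiv.Perm (Fin n) :=
  Fin.equivSubtype.symm.permCongr (π.subtypePerm fun i => apply_lt_iff_of_forall_ge hπ i)

end Equiv.Perm

section Exchangeable

variable {Ω S : Type*} {mΩ : MeasurableSpace Ω} [MeasurableSpace S] {P : Measure Ω}
  {X : ℕ → Ω → S}

lemma Exchangeable.map_comp_perm [IsFiniteMeasure P] (hX : ∀ i, Measurable (X i))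
    (hexch : Exchangeable P X) {π : Equiv.Perm ℕ} {n : ℕ} (hπ : ∀ m ≥ n, π m = m) :
    P.map (fun ω i => X (π i) ω) = P.map (fun ω i => X i ω) := by
  rw [map_eq_iff_forall_finset_map_restrict_eq (by fun_prop) (by fun_prop)]
  intro I
  set N := max n (I.sup id + 1)
  have hI : ∀ i ∈ I, i < N := fun i hi =>
    (Nat.lt_succ_of_le (Finset.le_sup (f := id) hi)).trans_le (le_max_right _ _)
  have hπN : ∀ m ≥ N, π m = m := fun m hm => hπ m ((le_max_left _ _).trans hm)
  let ρ : (Fin N → S) → (I → S) := fun g i => g ⟨i, hI i i.2⟩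
  have hρ : Measurable ρ := by fun_prop
  calc P.map (fun ω => I.restrict fun i => X (π i) ω)
      = (P.map fun ω (j : Fin N) => X (Equiv.Perm.finPerm π hπN j) ω).map ρ := by
        -- `(finPerm π hπN j : ℕ)` unfolds to `π j`
        rw [Measure.map_map hρ (measurable_pi_lambda _ fun j => hX _)]; rfl
    _ = (P.map fun ω (j : Fin N) => X j ω).map ρ := by rw [← hexch N]
    _ = P.map (fun ω => I.restrict fun i => X i ω) := by
        rw [Measure.map_map hρ (measurable_pi_lambda _ fun j => hX _)]; rfl

end Exchangeable

def permInvariantSigma (S : Type*) [MeasurableSpace S] (n : ℕ) : MeasurableSpace (ℕ → S) :=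
  ⨅ (π : Equiv.Perm ℕ) (_ : ∀ m ≥ n, π m = m), MeasurableSpace.invariants fun s i => s (π i)

def permSigma {Ω S : Type*} [MeasurableSpace S] (X : ℕ → Ω → S) (n : ℕ) : MeasurableSpace Ω :=
  (permInvariantSigma S n).comap fun ω i => X i ω

section PermSigma

variable {Ω S : Type*} {mΩ : MeasurableSpace Ω} [MeasurableSpace S] {X : ℕ → Ω → S} {n : ℕ}

lemma measurableSet_permInvariantSigma_iff {A : Set (ℕ → S)} :
    MeasurableSet[permInvariantSigma S n] A ↔
      MeasurableSet A ∧ ∀ π : Equiv.Perm ℕ, (∀ m ≥ n, π m = m) →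
        (fun s i => s (π i)) ⁻¹' A = A := by
  unfold permInvariantSigma
  simp only [MeasurableSpace.measurableSet_iInf, MeasurableSpace.measurableSet_invariants]
  exact ⟨fun h => ⟨(h 1 fun _ _ => rfl).1, fun π hπ => (h π hπ).2⟩,
    fun h π hπ => ⟨h.1, h.2 π hπ⟩⟩

lemma measurable_permInvariantSigma {β : Type*} [MeasurableSpace β] {g : (ℕ → S) → β}
    (hg : Measurable g)
    (hinv : ∀ π : Equiv.Perm ℕ, (∀ m ≥ n, π m = m) → ∀ s, g (fun i => s (π i)) = g s) :
    Measurable[permInvariantSigma S n] g := fun B hB =>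
  measurableSet_permInvariantSigma_iff.2
    ⟨hg hB, fun π hπ => by ext s; simp only [Set.mem_preimage, hinv π hπ]⟩

lemma antitone_permSigma : Antitone (permSigma X) := fun _ _ hmn =>
  MeasurableSpace.comap_mono <| le_iInf₂ fun π hπ =>
    iInf₂_le π fun k hk => hπ k (hmn.trans hk)

lemma permSigma_le (hX : ∀ i, Measurable (X i)) (n : ℕ) : permSigma X n ≤ mΩ :=
  (MeasurableSpace.comap_mono fun _ hA => (measurableSet_permInvariantSigma_iff.1 hA).1).trans
    (measurable_pi_lambda _ hX).comap_le

lemma exchangeableSigma_le_permSigma (n : ℕ) : exchangeableSigma X ≤ permSigma X n :=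
  MeasurableSpace.generateFrom_le fun _ ⟨A, hA, hinv, hB⟩ =>
    ⟨A, measurableSet_permInvariantSigma_iff.2 ⟨hA, fun π hπ => hinv π ⟨n, hπ⟩⟩, hB.symm⟩

end PermSigma

noncomputable def sampleMean (s : ℕ → ℝ) (n : ℕ) : ℝ := (∑ i ∈ range n, s i) / n

lemma sampleMean_comp_perm {π : Equiv.Perm ℕ} {n : ℕ} (hπ : ∀ m ≥ n, π m = m) (s : ℕ → ℝ) :
    sampleMean (fun i => s (π i)) n = sampleMean s n := by
  unfold sampleMean
  rw [π.sum_comp (range n) s fun i hi => mem_range.2 (by_contra fun h => hi (hπ i (not_lt.1 h)))]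

lemma measurable_sampleMean (n : ℕ) : Measurable fun s : ℕ → ℝ => sampleMean s n :=
  (Finset.measurable_sum _ fun i _ => measurable_pi_apply i).div_const _

/-- Where the sample means converge this is their limit; unlike `limUnder`, it is measurable and
invariant under finite permutations everywhere. -/
noncomputable def limsupSampleMean (s : ℕ → ℝ) : ℝ := limsup (sampleMean s) atTop

lemma measurable_limsupSampleMean : Measurable limsupSampleMean :=
  .limsup measurable_sampleMean

lemma limsupSampleMean_comp_perm {π : Equiv.Perm ℕ} (hπ : ∃ N, ∀ m ≥ N, π m = m)
    (s : ℕ → ℝ) : limsupSampleMean (fun i => s (π i)) = limsupSampleMean s := by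
  obtain ⟨N, hN⟩ := hπ
  refine limsup_congr ((eventually_ge_atTop N).mono fun n hn => ?_)
  exact sampleMean_comp_perm (fun m hm => hN m (hn.trans hm)) s

section RealValued

variable {Ω : Type*} {mΩ : MeasurableSpace Ω} {P : Measure Ω} {X : ℕ → Ω → ℝ}

lemma setIntegral_eq_of_measurableSet_permSigma [IsFiniteMeasure P] (hX : ∀ i, Measurable (X i))
    (hexch : Exchangeable P X) {n i j : ℕ} (hi : i < n) (hj : j < n) {B : Set Ω}
    (hB : MeasurableSet[permSigma X n] B) :
    ∫ ω in B, X i ω ∂P = ∫ ω in B, X j ω ∂P := by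
  obtain ⟨A, hA, rfl⟩ := hB
  obtain ⟨hAm, hAinv⟩ := measurableSet_permInvariantSigma_iff.1 hA
  have hπ : ∀ m ≥ n, Equiv.swap i j m = m := fun m hm =>
    Equiv.swap_apply_of_ne_of_ne (by omega) (by omega)
  set Y : Ω → ℕ → ℝ := fun ω k => X k ω
  set Yπ : Ω → ℕ → ℝ := fun ω k => X (Equiv.swap i j k) ω
  have hY : Measurable Y := measurable_pi_lambda _ hX
  have hYπ : Measurable Yπ := measurable_pi_lambda _ fun _ => hX _
  have hid : IdentDistrib Yπ Y P P :=
    ⟨hYπ.aemeasurable, hY.aemeasurable, hexch.map_comp_perm hX hπ⟩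
  have hΦ : Measurable (A.indicator fun s : ℕ → ℝ => s i) :=
    (measurable_pi_apply i).indicator hAm
  have key : ∀ Z : Ω → ℕ → ℝ, Measurable Z →
      ∫ ω in Z ⁻¹' A, Z ω i ∂P = ∫ ω, A.indicator (fun s => s i) (Z ω) ∂P := fun Z hZ => by
    rw [← integral_indicator (hZ hAm)]
    rfl
  have hpre : Yπ ⁻¹' A = Y ⁻¹' A := by
    conv_rhs => rw [← hAinv _ hπ]
    rfl
  calc ∫ ω in Y ⁻¹' A, X i ω ∂P
      = ∫ ω, A.indicator (fun s => s i) (Y ω) ∂P := key Y hY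
    _ = ∫ ω, A.indicator (fun s => s i) (Yπ ω) ∂P := (hid.comp hΦ).integral_eq.symm
    _ = ∫ ω in Y ⁻¹' A, X j ω ∂P := by
        rw [← key Yπ hYπ, hpre]
        simp [Yπ]

lemma sampleMean_ae_eq_condExp_permSigma [IsFiniteMeasure P] (hX : ∀ i, Measurable (X i))
    (hint : ∀ i, Integrable (X i) P) (hexch : Exchangeable P X) {n : ℕ} (hn : 0 < n) :
    (fun ω => sampleMean (fun i => X i ω) n) =ᵐ[P] P[X 0 | permSigma X n] := by
  have hmeas : Measurable[permSigma X n] fun ω => sampleMean (fun i => X i ω) n :=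
    (measurable_permInvariantSigma (measurable_sampleMean n)
      fun π hπ => sampleMean_comp_perm hπ).comp (comap_measurable _)
  refine ae_eq_condExp_of_forall_setIntegral_eq (permSigma_le hX n) (hint 0)
    (fun _ _ _ => ((integrable_finsetSum _ fun i _ => hint i).div_const _).integrableOn)
    (fun B hB _ => ?_) hmeas.stronglyMeasurable.aestronglyMeasurable
  have hsum : ∀ i ∈ range n, ∫ ω in B, X i ω ∂P = ∫ ω in B, X 0 ω ∂P := fun i hi =>
    setIntegral_eq_of_measurableSet_permSigma hX hexch (mem_range.1 hi) hn hB
  simp only [sampleMean]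
  rw [integral_div, integral_finsetSum _ fun i _ => (hint i).integrableOn, sum_congr rfl hsum,
    sum_const, card_range, nsmul_eq_mul]
  field_simp

lemma measurable_limsupSampleMean_exchangeableSigma :
    Measurable[exchangeableSigma X] fun ω => limsupSampleMean fun i => X i ω := fun B hB =>
  MeasurableSpace.measurableSet_generateFrom ⟨limsupSampleMean ⁻¹' B,
    measurable_limsupSampleMean hB,
    fun π hπ => by ext s; simp only [Set.mem_preimage, limsupSampleMean_comp_perm hπ], rfl⟩

end RealValued

/-- SLLN for exchangeable sequences: sample averages converge a.s. to the conditional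
expectation given the exchangeable σ-algebra. -/
theorem stmt0 {Ω : Type*} [mΩ : MeasurableSpace Ω] (P : Measure Ω) [IsProbabilityMeasure P]
    (X : ℕ → Ω → ℝ) (hX : ∀ n, Measurable (X n)) (hint : ∀ n, Integrable (X n) P)
    (hexch : Exchangeable P X) :
    ∀ᵐ ω ∂P, Filter.Tendsto (fun n : ℕ => (∑ i ∈ Finset.range n, X i ω) / n) Filter.atTop
      (𝓝 (MeasureTheory.condExp (exchangeableSigma X) P (X 0) ω)) := by
  have hmean : ∀ᵐ ω ∂P, ∀ n,
      sampleMean (fun i => X i ω) (n + 1) = P[X 0 | permSigma X (n + 1)] ω :=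
    ae_all_iff.2 fun n => sampleMean_ae_eq_condExp_permSigma hX hint hexch n.succ_pos
  have hconv : ∀ᵐ ω ∂P, Tendsto (fun n => P[X 0 | permSigma X (n + 1)] ω) atTop
      (𝓝 (limsupSampleMean fun i => X i ω)) := by
    filter_upwards [hmean, exists_ae_tendsto_condExp_of_antitone (μ := P) antitone_permSigma
      (permSigma_le hX) (X 0)] with ω hω ⟨c, hc⟩
    have hc' := (tendsto_add_atTop_iff_nat 1).2 hc
    have hS : Tendsto (sampleMean fun i => X i ω) atTop (𝓝 c) :=
      (tendsto_add_atTop_iff_nat 1).1 (hc'.congr fun n => (hω n).symm)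
    rwa [limsupSampleMean, hS.limsup_eq]
  have hid := ae_eq_condExp_of_tendsto_condExp (fun n => permSigma_le hX (n + 1))
    (fun n => exchangeableSigma_le_permSigma (n + 1)) (hint 0)
    measurable_limsupSampleMean_exchangeableSigma.stronglyMeasurable hconv
  filter_upwards [hmean, hconv, hid] with ω hω h₁ h₂
  rw [← h₂]
  exact (tendsto_add_atTop_iff_nat 1).1 (h₁.congr fun n => (hω n).symm)
end

section
/- Let (X_n) be an exchangeable process on (Ω, Σ, P) with values in (S, 𝒮), and let (B_m) be a sequence of measurable sets with P(X_1 ∈ B_m) → 0 as m → ∞. Then for P-almost all ω: for every ε > 0 there exists m such that for all n, the empirical measure μ_{ω,n}(B_m) < ε, where μ_{ω,n}(B) = (1/n) Σ_{i≤n} 1{X_i(ω) ∈ B}. -/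
open MeasureTheory ProbabilityTheory Filter Finset Topology

open scoped ENNReal

/-! Exchangeable sequences are stationary, and for a stationary sequence the rising-sun
covering argument gives the weak-type maximal inequality
`ε * P (∃ n, ε ≤ μ_{ω,n}(C)) ≤ 2 * P (X 0 ∈ C)`. Hence `ω ↦ sup_n μ_{ω,n}(B m)` tends to `0`
in probability as `m → ∞`, and along an almost surely convergent subsequence, for almost
every `ω`, the sets `B m` eventually have uniformly small empirical measure. -/

theorem card_filter_Ico_le_add (p : ℕ → Prop) [DecidablePred p] (j n M : ℕ) :
    #{x ∈ Ico j M | p x} ≤ n + #{x ∈ Ico (j + n) M | p x} :=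
  calc #{x ∈ Ico j M | p x} ≤ #(Ico j (j + n) ∪ {x ∈ Ico (j + n) M | p x}) :=
        card_le_card fun x hx => by
          rw [mem_filter, mem_Ico] at hx
          rcases lt_or_ge x (j + n) with hxn | hxn
          · exact mem_union_left _ (mem_Ico.2 ⟨hx.1.1, hxn⟩)
          · exact mem_union_right _ (mem_filter.2 ⟨mem_Ico.2 ⟨hxn, hx.1.2⟩, hx.2⟩)
    _ ≤ n + #{x ∈ Ico (j + n) M | p x} := (card_union_le _ _).trans_eq <| by
        rw [Nat.card_Ico, Nat.add_sub_cancel_left]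

theorem mul_card_filter_le_sum_of_window {R : Type*} [Semiring R] [PartialOrder R]
    [IsOrderedRing R] {y : ℕ → R} (hy : ∀ i, 0 ≤ y i) {ε : R} (hε : 0 ≤ ε) {N : ℕ}
    {p : ℕ → Prop} [DecidablePred p]
    (hp : ∀ j, p j → ∃ n ∈ Icc 1 N, ε * n ≤ ∑ i ∈ range n, y (j + i)) (M : ℕ) :
    ε * #{j ∈ range M | p j} ≤ ∑ i ∈ range (M + N), y i := by
  -- Scan from the left: a point `j` with `p j` opens a window of length `n` carrying mass at
  -- least `ε * n` and containing at most `n` such points; resume the scan after the window.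
  suffices key : ∀ k j, M - j = k → ε * #{x ∈ Ico j M | p x} ≤ ∑ i ∈ Ico j (M + N), y i by
    simpa only [range_eq_Ico] using key M 0 rfl
  intro k
  induction k using Nat.strong_induction_on with
  | _ k ih =>
  intro j hk
  rcases le_or_gt M j with hMj | hjM
  · simpa [Ico_eq_empty_of_le hMj] using sum_nonneg fun i _ => hy i
  by_cases hpj : p j
  · obtain ⟨n, hn, hwindow⟩ := hp j hpj
    rw [mem_Icc] at hn
    have hsplit : ∑ i ∈ Ico j (M + N), y i
        = ∑ i ∈ range n, y (j + i) + ∑ i ∈ Ico (j + n) (M + N), y i := by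
      rw [← sum_Ico_consecutive _ (by omega : j ≤ j + n) (by omega : j + n ≤ M + N),
        sum_Ico_eq_sum_range, Nat.add_sub_cancel_left]
    calc ε * #{x ∈ Ico j M | p x} ≤ ε * (n + #{x ∈ Ico (j + n) M | p x}) := by
          gcongr
          simpa only [Nat.cast_add] using Nat.mono_cast (α := R) (card_filter_Ico_le_add p j n M)
      _ = ε * n + ε * #{x ∈ Ico (j + n) M | p x} := mul_add _ _ _
      _ ≤ ∑ i ∈ range n, y (j + i) + ∑ i ∈ Ico (j + n) (M + N), y i :=
          add_le_add hwindow (ih _ (by omega) _ rfl)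
      _ = ∑ i ∈ Ico j (M + N), y i := hsplit.symm
  · calc ε * #{x ∈ Ico j M | p x} = ε * #{x ∈ Ico (j + 1) M | p x} := by
          rw [Nat.Ico_succ_left_eq_erase_Ico, filter_erase, erase_eq_of_notMem (by simp [hpj])]
      _ ≤ ∑ i ∈ Ico (j + 1) (M + N), y i := ih _ (by omega) _ rfl
      _ ≤ ∑ i ∈ Ico j (M + N), y i :=
          sum_le_sum_of_subset_of_nonneg (Ico_subset_Ico_left (by omega)) fun i _ _ => hy i

section Stationary

variable {Ω S : Type*}

def frequentPrefix (C : Set S) (ε : ℝ≥0∞) (N : ℕ) : Set (ℕ → S) :=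
  {x | ∃ n ∈ Icc 1 N, ε * n ≤ ∑ i ∈ range n, C.indicator 1 (x i)}

theorem frequentPrefix_mono (C : Set S) (ε : ℝ≥0∞) : Monotone (frequentPrefix C ε) :=
  fun _ _ hNM _ ⟨n, hn, hx⟩ => ⟨n, Icc_subset_Icc_right hNM hn, hx⟩

variable [MeasurableSpace S]

theorem measurableSet_frequentPrefix {C : Set S} (hC : MeasurableSet C) (ε : ℝ≥0∞)
    (N : ℕ) :
    MeasurableSet (frequentPrefix C ε N) := by
  have : frequentPrefix C ε N
      = ⋃ n ∈ Icc 1 N, {x | ε * n ≤ ∑ i ∈ range n, C.indicator 1 (x i)} := by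
    ext x
    simp [frequentPrefix]
  rw [this]
  refine Finset.measurableSet_biUnion _ fun n _ => measurableSet_le measurable_const ?_
  exact Finset.measurable_sum _ fun i _ =>
    (measurable_const.indicator hC).comp (measurable_pi_apply i)

variable {mΩ : MeasurableSpace Ω}

def IsStationarySeq (P : Measure Ω) (X : ℕ → Ω → S) : Prop :=
  ∀ j, P.map (fun ω i => X (j + i) ω) = P.map (fun ω i => X i ω)

theorem lintegral_sum_indicator_one {ι : Type*} (μ : Measure Ω) (s : Finset ι)
    {E : ι → Set Ω} (hE : ∀ i ∈ s, MeasurableSet (E i)) :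
    ∫⁻ ω, ∑ i ∈ s, (E i).indicator 1 ω ∂μ = ∑ i ∈ s, μ (E i) := by
  rw [lintegral_finsetSum _ fun i hi => measurable_one.indicator (hE i hi)]
  exact sum_congr rfl fun i hi => lintegral_indicator_one (hE i hi)

variable {P : Measure Ω} {X : ℕ → Ω → S}

theorem IsStationarySeq.measure_preimage_shift (hstat : IsStationarySeq P X)
    (hX : ∀ n, Measurable (X n)) {A : Set (ℕ → S)} (hA : MeasurableSet A) (j : ℕ) :
    P ((fun ω i => X (j + i) ω) ⁻¹' A) = P ((fun ω i => X i ω) ⁻¹' A) := by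
  rw [← Measure.map_apply (by fun_prop) hA, hstat, Measure.map_apply (by fun_prop) hA]

theorem IsStationarySeq.mul_measure_frequentPrefix_le (hstat : IsStationarySeq P X)
    (hX : ∀ n, Measurable (X n)) {C : Set S} (hC : MeasurableSet C) (ε : ℝ≥0∞) (N : ℕ) :
    ε * P ((fun ω i => X i ω) ⁻¹' frequentPrefix C ε N) ≤ 2 * P (X 0 ⁻¹' C) := by
  classical
  rcases N.eq_zero_or_pos with rfl | hN
  · simp [frequentPrefix]
  set E : ℕ → Set Ω := fun j => (fun ω i => X (j + i) ω) ⁻¹' frequentPrefix C ε N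
  have hE : ∀ j, MeasurableSet (E j) := fun j =>
    (measurableSet_frequentPrefix hC ε N).preimage (by fun_prop)
  have hcover : ∀ ω, ε * ∑ j ∈ range N, (E j).indicator 1 ω
      ≤ ∑ i ∈ range (N + N), (X i ⁻¹' C).indicator 1 ω := fun ω => by
    have hcount :
        ∑ j ∈ range N, (E j).indicator (1 : Ω → ℝ≥0∞) ω = #{j ∈ range N | ω ∈ E j} := by
      simp [Set.indicator_apply]
    rw [hcount]
    exact mul_card_filter_le_sum_of_window (y := fun i => C.indicator 1 (X i ω))
      (p := fun j => ω ∈ E j) (fun i => zero_le) zero_le (fun j hj => hj) N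
  have hmarginal : ∀ i, P (X i ⁻¹' C) = P (X 0 ⁻¹' C) := fun i =>
    hstat.measure_preimage_shift hX (A := {x | x 0 ∈ C}) (measurable_pi_apply 0 hC) i
  have hN' : (N : ℝ≥0∞) ≠ 0 := by exact_mod_cast hN.ne'
  refine (ENNReal.mul_le_mul_iff_right hN' (ENNReal.natCast_ne_top N)).1 ?_
  calc N * (ε * P ((fun ω i => X i ω) ⁻¹' frequentPrefix C ε N))
      = ε * ∑ j ∈ range N, P (E j) := by
        simp only [E, hstat.measure_preimage_shift hX (measurableSet_frequentPrefix hC ε N),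
          sum_const, card_range, nsmul_eq_mul]
        ring
    _ = ∫⁻ ω, ε * ∑ j ∈ range N, (E j).indicator 1 ω ∂P := by
        rw [lintegral_const_mul _ (Finset.measurable_sum _ fun j _ =>
            measurable_one.indicator (hE j)),
          lintegral_sum_indicator_one P _ fun j _ => hE j]
    _ ≤ ∫⁻ ω, ∑ i ∈ range (N + N), (X i ⁻¹' C).indicator 1 ω ∂P :=
        lintegral_mono hcover
    _ = N * (2 * P (X 0 ⁻¹' C)) := by
        rw [lintegral_sum_indicator_one P _ fun i _ => hX i hC]
        simp only [hmarginal, sum_const, card_range, nsmul_eq_mul]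
        push_cast
        ring

end Stationary

section Exchangeable

variable {Ω S : Type*} {mΩ : MeasurableSpace Ω} [MeasurableSpace S] {P : Measure Ω}
  {X : ℕ → Ω → S}

theorem Exchangeable.map_shift_finset (hX : ∀ n, Measurable (X n)) (hexch : Exchangeable P X)
    (j : ℕ) (I : Finset ℕ) :
    P.map (fun ω (i : I) => X (j + i) ω) = P.map (fun ω (i : I) => X i ω) := by
  set L := I.sup id + 1
  have hIL : ∀ i : I, (i : ℕ) < L := fun i => Nat.lt_succ_of_le (I.le_sup (f := id) i.2)
  -- `σ` moves the block `[0, L)` onto `[j, j + L)`.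
  let σ : Equiv.Perm (Fin (j + L)) := (finCongr (Nat.add_comm j L)).trans finAddFlip
  have hσ : ∀ i : I, (σ ⟨i, by have := hIL i; omega⟩ : ℕ) = j + i := fun i =>
    congrArg Fin.val (finAddFlip_apply_castAdd ⟨i, hIL i⟩ j)
  let π : (Fin (j + L) → S) → (I → S) := fun f i => f ⟨i, by have := hIL i; omega⟩
  have hπ : Measurable π := by fun_prop
  have hXσ : Measurable fun ω (k : Fin (j + L)) => X (σ k) ω := by fun_prop
  have hXK : Measurable fun ω (k : Fin (j + L)) => X k ω := by fun_prop
  calc P.map (fun ω (i : I) => X (j + i) ω)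
      = (P.map fun ω (k : Fin (j + L)) => X (σ k) ω).map π := by
        rw [Measure.map_map hπ hXσ]
        congr 1
        funext ω i
        simp only [Function.comp_apply, π, hσ]
    _ = (P.map fun ω (k : Fin (j + L)) => X k ω).map π := by rw [← hexch]
    _ = P.map (fun ω (i : I) => X i ω) := Measure.map_map hπ hXK

theorem Exchangeable.isStationarySeq [IsFiniteMeasure P] (hX : ∀ n, Measurable (X n))
    (hexch : Exchangeable P X) : IsStationarySeq P X := fun j => by
  refine IsProjectiveLimit.unique (P := fun I : Finset ℕ => P.map fun ω (i : I) => X i ω)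
    (fun I => ?_) (fun I => ?_)
  · rw [Measure.map_map (by fun_prop) (by fun_prop)]
    exact hexch.map_shift_finset hX j I
  · rw [Measure.map_map (by fun_prop) (by fun_prop)]
    rfl

end Exchangeable

section EmpiricalMeasure

variable {Ω S : Type*} {X : ℕ → Ω → S} {C : Set S} {ω : Ω}

theorem empAvg_nonneg (n : ℕ) : 0 ≤ empAvg X C ω n :=
  div_nonneg (sum_nonneg fun _ _ => Set.indicator_nonneg (fun _ _ => zero_le_one) _) n.cast_nonneg

theorem empAvg_le_one (n : ℕ) : empAvg X C ω n ≤ 1 := by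
  refine div_le_one_of_le₀ ?_ n.cast_nonneg
  calc ∑ i ∈ range n, C.indicator (fun _ => (1 : ℝ)) (X i ω)
      ≤ ∑ i ∈ range n, (1 : ℝ) :=
        sum_le_sum fun i _ => Set.indicator_le_self' (fun _ _ => zero_le_one) _
    _ = n := by simp

theorem mem_frequentPrefix_of_le_empAvg {ε : ℝ} (hε : 0 < ε) {n : ℕ}
    (h : ε ≤ empAvg X C ω n) :
    (fun i => X i ω) ∈ frequentPrefix C (ENNReal.ofReal ε) n := by
  have hn : n ≠ 0 := by
    rintro rfl
    simp only [empAvg, range_zero, sum_empty, Nat.cast_zero, div_zero] at h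
    linarith
  rw [empAvg, le_div_iff₀ (by positivity)] at h
  refine ⟨n, mem_Icc.2 ⟨Nat.one_le_iff_ne_zero.2 hn, le_rfl⟩, ?_⟩
  calc ENNReal.ofReal ε * n = ENNReal.ofReal (ε * n) := by
        rw [ENNReal.ofReal_mul hε.le, ENNReal.ofReal_natCast]
    _ ≤ ENNReal.ofReal (∑ i ∈ range n, C.indicator (fun _ => (1 : ℝ)) (X i ω)) :=
        ENNReal.ofReal_le_ofReal h
    _ = ∑ i ∈ range n, C.indicator 1 (X i ω) := by
        rw [ENNReal.ofReal_sum_of_nonneg fun i _ =>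
          Set.indicator_nonneg (fun _ _ => zero_le_one) _]
        refine sum_congr rfl fun i _ => ?_
        by_cases hi : X i ω ∈ C <;> simp [hi]

variable {mΩ : MeasurableSpace Ω} [MeasurableSpace S] {P : Measure Ω}

theorem IsStationarySeq.ofReal_mul_measure_exists_le_empAvg (hstat : IsStationarySeq P X)
    (hX : ∀ n, Measurable (X n)) (hC : MeasurableSet C) {ε : ℝ} (hε : 0 < ε) :
    ENNReal.ofReal ε * P {ω | ∃ n, ε ≤ empAvg X C ω n} ≤ 2 * P (X 0 ⁻¹' C) := by
  set F := fun N => (fun ω i => X i ω) ⁻¹' frequentPrefix C (ENNReal.ofReal ε) N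
  have hsub : {ω | ∃ n, ε ≤ empAvg X C ω n} ⊆ ⋃ N, F N :=
    fun ω ⟨n, hn⟩ => Set.mem_iUnion.2 ⟨n, mem_frequentPrefix_of_le_empAvg hε hn⟩
  have hmono : Monotone F := fun _ _ hNM => Set.preimage_mono (frequentPrefix_mono C _ hNM)
  calc ENNReal.ofReal ε * P {ω | ∃ n, ε ≤ empAvg X C ω n}
      ≤ ENNReal.ofReal ε * P (⋃ N, F N) := by gcongr
    _ = ⨆ N, ENNReal.ofReal ε * P (F N) := by rw [hmono.measure_iUnion, ENNReal.mul_iSup]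
    _ ≤ 2 * P (X 0 ⁻¹' C) := iSup_le fun N => hstat.mul_measure_frequentPrefix_le hX hC _ N

theorem Exchangeable.tendstoInMeasure_iSup_empAvg [IsFiniteMeasure P]
    (hX : ∀ n, Measurable (X n)) (hexch : Exchangeable P X) {B : ℕ → Set S}
    (hB : ∀ m, MeasurableSet (B m))
    (hlim : Tendsto (fun m => P (X 0 ⁻¹' B m)) atTop (𝓝 0)) :
    TendstoInMeasure P (fun m ω => ⨆ n, empAvg X (B m) ω n) atTop 0 := by
  refine tendstoInMeasure_of_ne_top fun δ hδ hδtop => ?_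
  have hδ' : 0 < δ.toReal := ENNReal.toReal_pos hδ.ne' hδtop
  set ε := δ.toReal / 2
  have hε : 0 < ENNReal.ofReal ε := ENNReal.ofReal_pos.2 (half_pos hδ')
  have hsub : ∀ m, {ω | δ ≤ edist (⨆ n, empAvg X (B m) ω n) 0}
      ⊆ {ω | ∃ n, ε ≤ empAvg X (B m) ω n} := by
    intro m ω hω
    have hY : 0 ≤ ⨆ n, empAvg X (B m) ω n := Real.iSup_nonneg fun n => empAvg_nonneg n
    rw [Set.mem_ofPred_eq, edist_dist, dist_zero_right, Real.norm_of_nonneg hY,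
      ENNReal.le_ofReal_iff_toReal_le hδtop hY] at hω
    obtain ⟨n, hn⟩ := exists_lt_of_lt_ciSup ((half_lt_self hδ').trans_le hω)
    exact ⟨n, hn.le⟩
  have hbound : ∀ m, P {ω | ∃ n, ε ≤ empAvg X (B m) ω n}
      ≤ 2 * P (X 0 ⁻¹' B m) / ENNReal.ofReal ε := fun m => by
    rw [ENNReal.le_div_iff_mul_le (Or.inl hε.ne') (Or.inl ENNReal.ofReal_ne_top), mul_comm]
    exact (hexch.isStationarySeq hX).ofReal_mul_measure_exists_le_empAvg hX (hB m) (half_pos hδ')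
  have hlim' : Tendsto (fun m => 2 * P (X 0 ⁻¹' B m) / ENNReal.ofReal ε) atTop (𝓝 0) := by
    simpa using ENNReal.Tendsto.div_const
      (ENNReal.Tendsto.const_mul hlim (Or.inr ENNReal.ofNat_ne_top)) (Or.inr hε.ne')
  exact tendsto_of_tendsto_of_tendsto_of_le_of_le tendsto_const_nhds hlim'
    (fun m => zero_le) fun m => (measure_mono (hsub m)).trans (hbound m)

end EmpiricalMeasure

/-- Uniform-in-`n` smallness of empirical measures along sets of vanishing
probability, almost surely. -/
theorem stmt7 {Ω S : Type*} [mΩ : MeasurableSpace Ω] [MeasurableSpace S]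
    (P : Measure Ω) [IsProbabilityMeasure P] (X : ℕ → Ω → S) (hX : ∀ n, Measurable (X n))
    (hexch : Exchangeable P X) (B : ℕ → Set S) (hB : ∀ m, MeasurableSet (B m))
    (hlim : Filter.Tendsto (fun m => P {ω | X 0 ω ∈ B m}) Filter.atTop (𝓝 0)) :
    ∀ᵐ ω ∂P, ∀ ε : ℝ, 0 < ε → ∃ m, ∀ n : ℕ, empAvg X (B m) ω n < ε := by
  obtain ⟨ns, -, hns⟩ := (hexch.tendstoInMeasure_iSup_empAvg hX hB hlim).exists_seq_tendsto_ae
  filter_upwards [hns] with ω hω ε hε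
  obtain ⟨i, hi⟩ := (hω.eventually (gt_mem_nhds hε)).exists
  have hbdd : BddAbove (Set.range fun n => empAvg X (B (ns i)) ω n) :=
    ⟨1, Set.forall_mem_range.2 empAvg_le_one⟩
  exact ⟨ns i, fun n => (le_ciSup hbdd n).trans_lt hi⟩
end

section
/- Let μ be a Borel probability measure on a Hausdorff topological space S. Then μ is Radon (inner regular with respect to compact sets on all Borel sets) if and only if μ is tight and outer regular on all compact sets. -/
open MeasureTheory ProbabilityTheory Filter Finset Topology

/-!
For a finite measure, inner regularity by compact sets on Borel sets forces outer regularity.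
Conversely, let `K` be a compact set of almost full measure. For an open set `U`, the set `K \ U`
is compact, so it has an open neighbourhood `V` of almost the same measure, and `K \ V` is a
compact subset of `U` of almost the same measure as `U`. Open sets being inner regular, the finite
measure is weakly regular: every Borel set contains a closed set of almost the same measure, and
intersecting that closed set with `K` makes it compact.
-/

open scoped ENNReal

namespace MeasureTheory

open MeasureTheory.Measure

variable {S : Type*} [MeasurableSpace S] {μ : Measure S}

lemma Measure.InnerRegularWRT.of_forall_exists_measure_sdiff_le [IsFiniteMeasure μ]
    {p q : Set S → Prop} (h : ∀ U, q U → ∀ ε > 0, ∃ K ⊆ U, p K ∧ μ (U \ K) ≤ ε) :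
    μ.InnerRegularWRT p q := by
  intro U hU r hr
  have hgap : μ U - r ≠ 0 := (tsub_pos_of_lt hr).ne'
  obtain ⟨K, hKU, hK, hUK⟩ := h U hU ((μ U - r) / 2) (ENNReal.half_pos hgap)
  refine ⟨K, hKU, hK, ?_⟩
  calc r < μ U - μ (U \ K) :=
        lt_tsub_comm.1 (hUK.trans_lt (ENNReal.half_lt_self hgap (by finiteness)))
    _ ≤ μ K := tsub_le_iff_tsub_le.1 le_measure_sdiff

variable [TopologicalSpace S]

lemma isRadon_iff_innerRegular : IsRadon μ ↔ μ.InnerRegular := by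
  have key : ∀ B, (μ B = ⨆ K ∈ {K : Set S | IsCompact K ∧ K ⊆ B}, μ K) ↔
      ∀ r < μ B, ∃ K ⊆ B, IsCompact K ∧ r < μ K := fun B => by
    rw [le_antisymm_iff, and_iff_left (iSup₂_le fun K hK => measure_mono hK.2),
      ← forall_lt_iff_le]
    simp only [lt_iSup_iff, Set.mem_ofPred_eq, exists_prop, and_assoc, and_left_comm]
  exact ⟨fun h => ⟨fun B hB => (key B).1 (h B hB)⟩, fun h B hB => (key B).2 (h.1 hB)⟩

lemma outerRegularOnCompacts_iff : OuterRegularOnCompacts μ ↔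
    ∀ K, IsCompact K → ∀ r, μ K < r → ∃ U, K ⊆ U ∧ IsOpen U ∧ μ U < r := by
  refine forall₂_congr fun K _ => ?_
  rw [le_antisymm_iff, and_iff_right (le_iInf₂ fun U hU => measure_mono hU.2),
    ← forall_gt_iff_le]
  simp only [iInf_lt_iff, Set.mem_ofPred_eq, exists_prop, and_assoc, and_left_comm]

lemma isTightMeasure_iff_isTightMeasureSet_singleton [T2Space S] [OpensMeasurableSpace S]
    [IsProbabilityMeasure μ] : IsTightMeasure μ ↔ IsTightMeasureSet {μ} := by
  simp only [isTightMeasureSet_iff_exists_isCompact_measure_compl_le, Set.mem_singleton_iff,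
    forall_eq]
  refine ⟨fun h ε hε => ?_, fun h ε hε => ?_⟩
  · rcases eq_or_ne ε ∞ with rfl | hε_top
    · exact ⟨∅, isCompact_empty, le_top⟩
    obtain ⟨K, hK, hμK⟩ := h ε.toReal (ENNReal.toReal_pos hε.ne' hε_top)
    rw [ENNReal.ofReal_toReal hε_top] at hμK
    refine ⟨K, hK, ?_⟩
    rw [prob_compl_eq_one_sub hK.measurableSet]
    exact tsub_le_iff_tsub_le.1 hμK.le
  · -- capped at `1`, so that the truncated subtraction in `1 - μ K < δ` can be flipped
    set δ := min (ENNReal.ofReal ε) 1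
    have hδ : δ ≠ 0 := (lt_min (ENNReal.ofReal_pos.2 hε) one_pos).ne'
    obtain ⟨K, hK, hμK⟩ := h _ (ENNReal.half_pos hδ)
    refine ⟨K, hK, (tsub_le_tsub_left (min_le_left _ 1) 1).trans_lt ?_⟩
    refine ENNReal.sub_lt_of_sub_lt (min_le_right _ _) (Or.inl ENNReal.one_ne_top) ?_
    rw [← prob_compl_eq_one_sub hK.measurableSet]
    exact hμK.trans_lt (ENNReal.half_lt_self hδ (min_lt_of_right_lt ENNReal.one_lt_top).ne)

lemma IsTightMeasureSet.innerRegularWRT_isCompact_isClosed [IsFiniteMeasure μ]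
    (h : IsTightMeasureSet {μ}) : μ.InnerRegularWRT IsCompact IsClosed := by
  rw [isTightMeasureSet_iff_exists_isCompact_measure_compl_le] at h
  refine .of_forall_exists_measure_sdiff_le fun F hF ε hε => ?_
  obtain ⟨K, hK, hμK⟩ := h ε hε
  refine ⟨F ∩ K, Set.inter_subset_left, hK.inter_left hF, ?_⟩
  rw [Set.sdiff_self_inter]
  exact (measure_mono (Set.sdiff_subset_compl F K)).trans (hμK μ rfl)

lemma IsTightMeasureSet.innerRegularWRT_isCompact_isOpen [T2Space S] [OpensMeasurableSpace S]
    [IsFiniteMeasure μ] (ht : IsTightMeasureSet {μ})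
    (ho : ∀ K, IsCompact K → ∀ r, μ K < r → ∃ U, K ⊆ U ∧ IsOpen U ∧ μ U < r) :
    μ.InnerRegularWRT IsCompact IsOpen := by
  rw [isTightMeasureSet_iff_exists_isCompact_measure_compl_le] at ht
  refine .of_forall_exists_measure_sdiff_le fun U hU ε hε => ?_
  have hε2 := ENNReal.half_pos hε.ne'
  obtain ⟨K, hK, hμK⟩ := ht _ hε2
  have hKU : IsCompact (K \ U) := hK.diff hU
  obtain ⟨V, hKV, hV, hμV⟩ :=
    ho _ hKU _ (ENNReal.lt_add_right (measure_ne_top μ (K \ U)) hε2.ne')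
  refine ⟨K \ V, fun x hx => by_contra fun hxU => hx.2 (hKV ⟨hx.1, hxU⟩), hK.diff hV, ?_⟩
  have hcover : U \ (K \ V) ⊆ Kᶜ ∪ V \ (K \ U) := by
    intro x
    simp only [Set.mem_sdiff, Set.mem_union, Set.mem_compl_iff]
    tauto
  calc μ (U \ (K \ V)) ≤ μ Kᶜ + μ (V \ (K \ U)) :=
        (measure_mono hcover).trans (measure_union_le _ _)
    _ ≤ ε / 2 + ε / 2 := by
      gcongr
      · exact hμK μ rfl
      · exact (measure_sdiff_lt_of_lt_add hKU.measurableSet.nullMeasurableSet hKV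
          (measure_ne_top μ _) hμV).le
    _ = ε := ENNReal.add_halves ε

lemma IsTightMeasureSet.innerRegular [T2Space S] [BorelSpace S] [IsFiniteMeasure μ]
    (ht : IsTightMeasureSet {μ})
    (ho : ∀ K, IsCompact K → ∀ r, μ K < r → ∃ U, K ⊆ U ∧ IsOpen U ∧ μ U < r) :
    μ.InnerRegular := by
  have : μ.WeaklyRegular := InnerRegularWRT.weaklyRegular_of_finite μ <|
    (ht.innerRegularWRT_isCompact_isOpen ho).mono (fun _ => id) fun _ hK => hK.isClosed
  have : μ.InnerRegularCompactLTTop :=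
    ⟨ht.innerRegularWRT_isCompact_isClosed.trans WeaklyRegular.innerRegular_measurable⟩
  infer_instance

end MeasureTheory

/-- A Borel probability measure on a Hausdorff space is Radon iff it is tight and
outer regular on compact sets. -/
theorem stmt9 {S : Type*} [TopologicalSpace S] [T2Space S] [MeasurableSpace S] [BorelSpace S]
    (μ : Measure S) [IsProbabilityMeasure μ] :
    IsRadon μ ↔ IsTightMeasure μ ∧ OuterRegularOnCompacts μ := by
  rw [isRadon_iff_innerRegular, isTightMeasure_iff_isTightMeasureSet_singleton,
    outerRegularOnCompacts_iff]
  exact ⟨fun _ => ⟨isTightMeasureSet_singleton_of_innerRegular,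
      fun _ hK => hK.exists_isOpen_lt_of_lt⟩,
    fun ⟨ht, ho⟩ => ht.innerRegular ho⟩
end
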